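/- Let G be a graph, C ⊆ V(G) a clique of size |C| ≥ 2, and let G' be obtained from G by contracting C to a vertex u_C and adding a pendant neighbor v_C of u_C. Then the minimum size of a connected vertex cover of G is at least the minimum size of a connected vertex cover of G' plus |C| − 2. -/

import Mathlib

/-!
Map `V` to the vertices of `G'` by sending `C` to `u_C` and fixing every other vertex. The image
of a connected vertex cover `X` is again connected, since every edge of `G[X]` is either
collapsed or mapped to an edge, and it covers every edge of `G'`: edges away from `u_C` come
from edges of `G`, and `u_C` lies in the image because `X` meets the clique `C`. As `X` covers
the clique, it misses at most one vertex of `C`, so the image has at most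
`|X \ C| + 1 ≤ |X| - |C| + 2` vertices.
-/

/-- `X` is a vertex cover of `G`: every edge has at least one endpoint in `X`. -/
def IsVertexCover {V : Type*} (G : SimpleGraph V) (X : Set V) : Prop :=
  ∀ ⦃u v : V⦄, G.Adj u v → u ∈ X ∨ v ∈ X

/-- `X` is a connected vertex cover of `G`. -/
def IsConnectedVertexCover {V : Type*} (G : SimpleGraph V) (X : Set V) : Prop :=
  IsVertexCover G X ∧ (G.induce X).Connected

/-- The graph obtained from `G` by contracting the set `C` to a single vertex `u_C`
(represented by `some none`) and attaching a new pendant vertex `v_C`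
(represented by `none`) adjacent only to `u_C`. -/
def contractCliquePendant {V : Type*} (G : SimpleGraph V) (C : Set V) :
    SimpleGraph (Option (Option {v : V // v ∉ C})) :=
  SimpleGraph.fromRel (fun x y =>
    match x, y with
    | some (some a), some (some b) => G.Adj a.1 b.1
    | some none, some (some a) => ∃ s ∈ C, G.Adj s a.1
    | none, some none => True
    | _, _ => False)

namespace SimpleGraph

variable {V W : Type*}

theorem Connected.induce_image {G : SimpleGraph V} {H : SimpleGraph W} {f : V → W}
    (hf : ∀ ⦃a b⦄, G.Adj a b → f a = f b ∨ H.Adj (f a) (f b)) {X : Set V}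
    (hX : (G.induce X).Connected) : (H.induce (f '' X)).Connected := by
  let g : X → f '' X := fun p => ⟨f p, Set.mem_image_of_mem f p.2⟩
  have hg : ∀ p q, (G.induce X).Adj p q → (H.induce (f '' X)).Reachable (g p) (g q) := by
    intro p q hpq
    rcases hf hpq with heq | hadj
    · exact (Subtype.ext heq : g p = g q) ▸ Reachable.refl _
    · exact Adj.reachable (show (H.induce (f '' X)).Adj (g p) (g q) from hadj)
  refine (connected_iff _).mpr ⟨?_, hX.nonempty.map g⟩
  rintro ⟨_, a, ha, rfl⟩ ⟨_, b, hb, rfl⟩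
  have hab := (reachable_iff_reflTransGen _ _).mp (hX.preconnected ⟨a, ha⟩ ⟨b, hb⟩)
  exact (reachable_iff_reflTransGen _ _).mpr <|
    hab.lift' g fun p q hpq => (reachable_iff_reflTransGen _ _).mp (hg p q hpq)

end SimpleGraph

variable {V : Type*} {G : SimpleGraph V} {C X : Set V}

theorem IsVertexCover.sdiff_subsingleton_of_isClique (hX : IsVertexCover G X)
    (hC : G.IsClique C) : (C \ X).Subsingleton := by
  intro a ha b hb
  by_contra hab
  rcases hX (hC ha.1 hb.1 hab) with h | h
  exacts [ha.2 h, hb.2 h]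

open Classical in
noncomputable def contractMap (C : Set V) (v : V) : Option (Option {v : V // v ∉ C}) :=
  if h : v ∈ C then some none else some (some ⟨v, h⟩)

theorem contractMap_of_mem {v : V} (h : v ∈ C) : contractMap C v = some none := dif_pos h

theorem contractMap_of_notMem {v : V} (h : v ∉ C) :
    contractMap C v = some (some ⟨v, h⟩) := dif_neg h

theorem contractMap_injOn : Set.InjOn (contractMap C) Cᶜ := by
  intro a ha b hb hab
  rw [contractMap_of_notMem ha, contractMap_of_notMem hb] at hab
  simpa using hab

theorem contractMap_eq_or_adj {a b : V} (hab : G.Adj a b) :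
    contractMap C a = contractMap C b ∨
      (contractCliquePendant G C).Adj (contractMap C a) (contractMap C b) := by
  by_cases ha : a ∈ C <;> by_cases hb : b ∈ C
  · exact .inl (by rw [contractMap_of_mem ha, contractMap_of_mem hb])
  · right
    rw [contractMap_of_mem ha, contractMap_of_notMem hb, contractCliquePendant,
      SimpleGraph.fromRel_adj]
    exact ⟨by simp, .inl ⟨a, ha, hab⟩⟩
  · right
    rw [contractMap_of_notMem ha, contractMap_of_mem hb, contractCliquePendant,
      SimpleGraph.fromRel_adj]
    exact ⟨by simp, .inr ⟨b, hb, hab.symm⟩⟩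
  · right
    rw [contractMap_of_notMem ha, contractMap_of_notMem hb, contractCliquePendant,
      SimpleGraph.fromRel_adj]
    exact ⟨by simp [hab.ne], .inl hab⟩

theorem exists_adj_of_contractCliquePendant_adj {x y : Option (Option {v : V // v ∉ C})}
    (hxy : (contractCliquePendant G C).Adj x y) (hx : x ≠ some none) (hy : y ≠ some none) :
    ∃ a b, G.Adj a b ∧ contractMap C a = x ∧ contractMap C b = y := by
  rw [contractCliquePendant, SimpleGraph.fromRel_adj] at hxy
  obtain ⟨-, hxy | hxy⟩ := hxy <;>
  rcases x with _ | _ | ⟨a, ha⟩ <;> rcases y with _ | _ | ⟨b, hb⟩ <;>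
    simp_all only [ne_eq, not_true_eq_false]
  · exact ⟨a, b, hxy, contractMap_of_notMem ha, contractMap_of_notMem hb⟩
  · exact ⟨a, b, hxy.symm, contractMap_of_notMem ha, contractMap_of_notMem hb⟩

theorem IsVertexCover.image_contractMap (hX : IsVertexCover G X) (hXC : (X ∩ C).Nonempty) :
    IsVertexCover (contractCliquePendant G C) (contractMap C '' X) := by
  obtain ⟨c, hcX, hcC⟩ := hXC
  have hu : some none ∈ contractMap C '' X := ⟨c, hcX, contractMap_of_mem hcC⟩
  intro x y hxy
  by_cases hx : x = some none
  · exact .inl (hx ▸ hu)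
  by_cases hy : y = some none
  · exact .inr (hy ▸ hu)
  obtain ⟨a, b, hab, rfl, rfl⟩ := exists_adj_of_contractCliquePendant_adj hxy hx hy
  exact (hX hab).imp (Set.mem_image_of_mem _) (Set.mem_image_of_mem _)

theorem IsConnectedVertexCover.image_contractMap (hX : IsConnectedVertexCover G X)
    (hXC : (X ∩ C).Nonempty) :
    IsConnectedVertexCover (contractCliquePendant G C) (contractMap C '' X) :=
  ⟨hX.1.image_contractMap hXC, hX.2.induce_image fun _ _ => contractMap_eq_or_adj⟩

theorem ncard_image_contractMap_le (hX : X.Finite) :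
    (contractMap C '' X).ncard ≤ (X \ C).ncard + 1 := by
  have hsub : contractMap C '' X ⊆ insert (some none) (contractMap C '' (X \ C)) := by
    rintro _ ⟨a, ha, rfl⟩
    by_cases haC : a ∈ C
    · exact .inl (contractMap_of_mem haC)
    · exact .inr ⟨a, ⟨ha, haC⟩, rfl⟩
  calc (contractMap C '' X).ncard
      ≤ (insert (some none) (contractMap C '' (X \ C))).ncard :=
        Set.ncard_le_ncard hsub ((hX.sdiff.image _).insert _)
    _ ≤ (contractMap C '' (X \ C)).ncard + 1 := Set.ncard_insert_le _ _
    _ = (X \ C).ncard + 1 := by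
        rw [(contractMap_injOn.mono fun _ h => h.2).ncard_image]

theorem stmt17_general {V : Type} [Fintype V] (G : SimpleGraph V)
    (C : Set V) (hCcard : 2 ≤ C.ncard) (hC : G.IsClique C) :
    ∀ X : Set V, IsConnectedVertexCover G X →
      ∃ Y : Set (Option (Option {v : V // v ∉ C})),
        IsConnectedVertexCover (contractCliquePendant G C) Y ∧
        Y.ncard + C.ncard ≤ X.ncard + 2 := by
  intro X hX
  have hCX : (C \ X).ncard ≤ 1 :=
    Set.ncard_le_one_iff_subsingleton.mpr (hX.1.sdiff_subsingleton_of_isClique hC)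
  have hXC : (X ∩ C).Nonempty := by
    by_contra h
    rw [Set.not_nonempty_iff_eq_empty, ← Set.disjoint_iff_inter_eq_empty] at h
    rw [h.symm.sdiff_eq_left] at hCX
    omega
  refine ⟨contractMap C '' X, hX.image_contractMap hXC, ?_⟩
  have hY := ncard_image_contractMap_le (C := C) X.toFinite
  have hXsplit := Set.ncard_inter_add_ncard_sdiff_eq_ncard X C
  have hCsplit := Set.ncard_inter_add_ncard_sdiff_eq_ncard C X
  rw [Set.inter_comm] at hCsplit
  omega

/-- Contracting a clique `C` of size at least 2 (and adding a pendant to the contracted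
vertex) decreases the minimum connected vertex cover size by at least `|C| - 2`:
for every connected vertex cover `X` of `G` there is a connected vertex cover `Y` of
the reduced graph with `|Y| + |C| ≤ |X| + 2`. -/
theorem stmt17 {V : Type} [Fintype V] (G : SimpleGraph V) (hG : G.Connected)
    (C : Set V) (hCcard : 2 ≤ C.ncard) (hC : G.IsClique C) :
    ∀ X : Set V, IsConnectedVertexCover G X →
      ∃ Y : Set (Option (Option {v : V // v ∉ C})),
        IsConnectedVertexCover (contractCliquePendant G C) Y ∧
        Y.ncard + C.ncard ≤ X.ncard + 2 :=
  stmt17_general G C hCcard hC
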